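/- For an odd integer n ≥ 3 and any real α ∈ [0,1], the largest eigenvalue of the A_α-matrix of the friendship graph F_{(n-1)/2} (the join of K_1 with (n-1)/2 disjoint copies of K_2) equals (αn + 1 + √(α²n² − 10αn + 12α + 4n − 3))/2. -/

import Mathlib

open scoped Classical

/-- The `A_α`-matrix of a graph: `α D(G) + (1-α) A(G)`. -/
noncomputable def Aalpha {V : Type*} [Fintype V] (G : SimpleGraph V) (α : ℝ) :
    Matrix V V ℝ :=
  α • Matrix.diagonal (fun v => ((G.neighborSet v).ncard : ℝ)) +
    (1 - α) • (Matrix.of fun u v => if G.Adj u v then (1 : ℝ) else 0)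

/-- `r` is the largest (real) eigenvalue of the matrix `M`. -/
def IsLargestEigenvalue {n : Type*} [Fintype n] (M : Matrix n n ℝ) (r : ℝ) : Prop :=
  (∃ x : n → ℝ, x ≠ 0 ∧ M.mulVec x = r • x) ∧
    ∀ s : ℝ, (∃ x : n → ℝ, x ≠ 0 ∧ M.mulVec x = s • x) → s ≤ r

/-- The friendship graph `F_k = K₁ ∨ k K₂` on `2k+1` vertices: vertex `0` is joined to
all others, and the remaining vertices are matched in pairs `(1,2), (3,4), …`. -/
def friendshipGraph (k : ℕ) : SimpleGraph (Fin (2 * k + 1)) where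
  Adj u v := u ≠ v ∧ (u.val = 0 ∨ v.val = 0 ∨ (u.val + 1) / 2 = (v.val + 1) / 2)
  symm := ⟨by
    rintro u v ⟨h1, h2⟩
    refine ⟨h1.symm, ?_⟩
    rcases h2 with h | h | h
    · exact Or.inr (Or.inl h)
    · exact Or.inl h
    · exact Or.inr (Or.inr h.symm)⟩
  loopless := ⟨fun u h => h.1 rfl⟩

/-- The join `G₁ ∨ G₂` of two graphs. -/
def graphJoin {V₁ V₂ : Type*} (G₁ : SimpleGraph V₁) (G₂ : SimpleGraph V₂) :
    SimpleGraph (V₁ ⊕ V₂) where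
  Adj x y :=
    match x, y with
    | Sum.inl a, Sum.inl b => G₁.Adj a b
    | Sum.inr a, Sum.inr b => G₂.Adj a b
    | _, _ => True
  symm := ⟨by
    rintro (a | a) (b | b) h
    · exact G₁.adj_symm h
    · trivial
    · trivial
    · exact G₂.adj_symm h⟩
  loopless := ⟨by
    rintro (a | a) h
    · exact G₁.loopless.irrefl a h
    · exact G₂.loopless.irrefl a h⟩

/-- A graph is 2-edge-connected if it has at least 3 vertices, is connected, and
remains connected after deleting any single edge. -/
def TwoEdgeConnected {V : Type*} [Fintype V] (G : SimpleGraph V) : Prop :=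
  3 ≤ Fintype.card V ∧ G.Connected ∧ ∀ e ∈ G.edgeSet, (G.deleteEdges {e}).Connected

/-- A graph is minimally 2-edge-connected if it is 2-edge-connected and deleting any
edge destroys 2-edge-connectedness. -/
def MinimallyTwoEdgeConnected {V : Type*} [Fintype V] (G : SimpleGraph V) : Prop :=
  TwoEdgeConnected G ∧ ∀ e ∈ G.edgeSet, ¬ TwoEdgeConnected (G.deleteEdges {e})

/-- A graph is 3-connected if it has more than 3 vertices and deleting any at most 2
vertices leaves a connected graph. -/
def ThreeConnected {V : Type*} [Fintype V] (G : SimpleGraph V) : Prop :=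
  3 < Fintype.card V ∧ ∀ s : Set V, s.ncard ≤ 2 → (G.induce sᶜ).Connected

/-- A graph is minimally 3-connected if it is 3-connected and deleting any edge
destroys 3-connectedness. -/
def MinimallyThreeConnected {V : Type*} [Fintype V] (G : SimpleGraph V) : Prop :=
  ThreeConnected G ∧ ∀ e ∈ G.edgeSet, ¬ ThreeConnected (G.deleteEdges {e})

/-! ### Auxiliary lemmas -/

/-- Perron-type bound: if a nonnegative matrix `M` satisfies `M v ≤ ρ v` pointwise for some
positive vector `v`, then every eigenvalue of `M` is at most `ρ`. -/
lemma perron_bound {m : Type*} [Fintype m] (M : Matrix m m ℝ) (hM : ∀ i j, 0 ≤ M i j)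
    (v : m → ℝ) (hv : ∀ i, 0 < v i) (ρ : ℝ) (hMv : ∀ i, M.mulVec v i ≤ ρ * v i)
    (x : m → ℝ) (hx : x ≠ 0) (s : ℝ) (hMx : M.mulVec x = s • x) : s ≤ ρ := by
  obtain ⟨j0, hj0⟩ := Function.ne_iff.1 hx
  have hne : (Finset.univ : Finset m).Nonempty := ⟨j0, Finset.mem_univ j0⟩
  obtain ⟨i0, -, hi0⟩ := Finset.exists_max_image Finset.univ (fun i => |x i| / v i) hne
  set c := |x i0| / v i0 with hc
  have hcb : ∀ j, |x j| ≤ c * v j := fun j =>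
    (div_le_iff₀ (hv j)).1 (hi0 j (Finset.mem_univ j))
  have hcpos : 0 < c :=
    lt_of_lt_of_le (div_pos (abs_pos.2 (by simpa using hj0)) (hv j0)) (hi0 j0 (Finset.mem_univ j0))
  have hxi0 : |x i0| = c * v i0 := (div_mul_cancel₀ _ (hv i0).ne').symm
  have key : |s| * (c * v i0) ≤ c * (ρ * v i0) := by
    calc |s| * (c * v i0) = |s * x i0| := by rw [abs_mul, hxi0]
    _ = |M.mulVec x i0| := by rw [hMx]; simp [abs_mul]
    _ = |∑ j, M i0 j * x j| := by simp [Matrix.mulVec, dotProduct]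
    _ ≤ ∑ j, |M i0 j * x j| := Finset.abs_sum_le_sum_abs _ _
    _ = ∑ j, M i0 j * |x j| := by
        refine Finset.sum_congr rfl fun j _ => ?_
        rw [abs_mul, abs_of_nonneg (hM i0 j)]
    _ ≤ ∑ j, M i0 j * (c * v j) :=
        Finset.sum_le_sum fun j _ => mul_le_mul_of_nonneg_left (hcb j) (hM i0 j)
    _ = c * ∑ j, M i0 j * v j := by rw [Finset.mul_sum]; exact Finset.sum_congr rfl fun j _ => by ring
    _ = c * M.mulVec v i0 := by simp [Matrix.mulVec, dotProduct]
    _ ≤ c * (ρ * v i0) := mul_le_mul_of_nonneg_left (hMv i0) hcpos.le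
  have hs : |s| ≤ ρ := by
    have h1 : 0 < c * v i0 := mul_pos hcpos (hv i0)
    nlinarith
  linarith [le_abs_self s]

lemma Aalpha_mulVec {V : Type*} [Fintype V] (G : SimpleGraph V) (α : ℝ) (x : V → ℝ) (w : V) :
    (Aalpha G α).mulVec x w =
      α * (((G.neighborSet w).ncard : ℝ) * x w) +
        (1 - α) * ∑ u, if G.Adj w u then x u else 0 := by
  rw [Aalpha, Matrix.add_mulVec, Matrix.smul_mulVec, Matrix.smul_mulVec]
  simp only [Pi.add_apply, Pi.smul_apply, Matrix.mulVec_diagonal, smul_eq_mul]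
  congr 1
  simp only [Matrix.mulVec, dotProduct, Matrix.of_apply, ite_mul, one_mul, zero_mul]

lemma Aalpha_nonneg {V : Type*} [Fintype V] (G : SimpleGraph V) (α : ℝ)
    (h0 : 0 ≤ α) (h1 : α ≤ 1) (i j : V) : 0 ≤ Aalpha G α i j := by
  simp only [Aalpha, Matrix.add_apply, Matrix.smul_apply, Matrix.diagonal_apply,
    Matrix.of_apply, smul_eq_mul]
  have hd : (0:ℝ) ≤ ((G.neighborSet i).ncard : ℝ) := Nat.cast_nonneg _
  split_ifs <;> nlinarith

namespace FG
variable {k : ℕ}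

def z (k : ℕ) : Fin (2 * k + 1) := ⟨0, by omega⟩

def p (v : Fin (2 * k + 1)) : Fin (2 * k + 1) :=
  ⟨if v.val % 2 = 1 then v.val + 1 else v.val - 1, by
    have := v.isLt; split <;> omega⟩

lemma p_val (v : Fin (2 * k + 1)) :
    (p v).val = if v.val % 2 = 1 then v.val + 1 else v.val - 1 := rfl

lemma adj_z (u : Fin (2 * k + 1)) :
    (friendshipGraph k).Adj (z k) u ↔ u ≠ z k := by
  constructor
  · rintro ⟨h1, -⟩; exact h1.symm
  · intro h; exact ⟨h.symm, Or.inl rfl⟩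

lemma adj_pos (v u : Fin (2 * k + 1)) (hv : v.val ≠ 0) :
    (friendshipGraph k).Adj v u ↔ (u = z k ∨ u = p v) := by
  have hpval := p_val v
  constructor
  · rintro ⟨h1, h2 | h2 | h2⟩
    · exact absurd h2 hv
    · exact Or.inl (Fin.ext h2)
    · refine Or.inr (Fin.ext ?_)
      have hval : u.val ≠ v.val := fun h => h1 (Fin.ext h.symm)
      have := v.isLt
      have := u.isLt
      split at hpval <;> omega
  · rintro (rfl | rfl)
    · exact ⟨fun h => hv (congrArg Fin.val h), Or.inr (Or.inl rfl)⟩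
    · refine ⟨?_, Or.inr (Or.inr ?_)⟩
      · intro h
        have := congrArg Fin.val h
        rw [hpval] at this
        split at this <;> omega
      · rw [hpval]; split <;> omega

lemma p_val_ne (v : Fin (2 * k + 1)) (hv : v.val ≠ 0) : (p v).val ≠ 0 := by
  have := p_val v; split at this <;> omega

lemma deg_z : (((friendshipGraph k).neighborSet (z k)).ncard : ℕ) = 2 * k := by
  have hset : (friendshipGraph k).neighborSet (z k) = Set.univ \ {z k} := by
    ext u
    simp only [SimpleGraph.mem_neighborSet, adj_z, Set.mem_diff, Set.mem_univ,
      Set.mem_singleton_iff, true_and]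
  rw [hset, Set.ncard_diff_singleton_of_mem (Set.mem_univ _), Set.ncard_univ,
    Nat.card_eq_fintype_card, Fintype.card_fin]
  omega

lemma deg_pos (v : Fin (2 * k + 1)) (hv : v.val ≠ 0) :
    ((friendshipGraph k).neighborSet v).ncard = 2 := by
  have hset : (friendshipGraph k).neighborSet v = {z k, p v} := by
    ext u
    simp only [SimpleGraph.mem_neighborSet, adj_pos v u hv, Set.mem_insert_iff,
      Set.mem_singleton_iff]
  rw [hset, Set.ncard_pair]
  intro h
  exact p_val_ne v hv (congrArg Fin.val h).symm

noncomputable def xab (k : ℕ) (a b : ℝ) : Fin (2 * k + 1) → ℝ :=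
  fun v => if v.val = 0 then a else b

lemma xab_z (a b : ℝ) : xab k a b (z k) = a := if_pos rfl

lemma xab_pos (a b : ℝ) (v : Fin (2 * k + 1)) (hv : v.val ≠ 0) : xab k a b v = b := if_neg hv

lemma row_z (α a b : ℝ) :
    (Aalpha (friendshipGraph k) α).mulVec (xab k a b) (z k) =
      α * ((2 * k : ℝ) * a) + (1 - α) * ((2 * k : ℝ) * b) := by
  rw [Aalpha_mulVec, deg_z, xab_z]
  congr 2
  · push_cast; ring
  have h1 : ∀ u : Fin (2 * k + 1),
      (if (friendshipGraph k).Adj (z k) u then xab k a b u else 0)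
        = b - (if u = z k then b else 0) := by
    intro u
    by_cases h : u = z k
    · simp [h, adj_z]
    · have hu : u.val ≠ 0 := fun hu0 => h (Fin.ext hu0)
      simp [adj_z, h, xab_pos a b u hu]
  rw [Finset.sum_congr rfl fun u _ => h1 u, Finset.sum_sub_distrib,
    Finset.sum_const, Finset.sum_ite_eq' Finset.univ (z k) (fun _ => b)]
  simp [Finset.card_univ]
  ring

lemma row_pos (α a b : ℝ) (v : Fin (2 * k + 1)) (hv : v.val ≠ 0) :
    (Aalpha (friendshipGraph k) α).mulVec (xab k a b) v =
      α * (2 * b) + (1 - α) * (a + b) := by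
  rw [Aalpha_mulVec, deg_pos v hv, xab_pos a b v hv]
  have hzp : z k ≠ p v := fun h => p_val_ne v hv (congrArg Fin.val h).symm
  have h1 : ∀ u : Fin (2 * k + 1),
      (if (friendshipGraph k).Adj v u then xab k a b u else 0)
        = (if u = z k then xab k a b u else 0) + (if u = p v then xab k a b u else 0) := by
    intro u
    by_cases h2 : u = z k
    · subst h2; simp [adj_pos _ _ hv, hzp]
    · by_cases h3 : u = p v
      · subst h3; simp [adj_pos _ _ hv, h2]
      · simp [adj_pos _ _ hv, h2, h3]
  rw [Finset.sum_congr rfl fun u _ => h1 u, Finset.sum_add_distrib,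
    Finset.sum_ite_eq' Finset.univ (z k) (xab k a b),
    Finset.sum_ite_eq' Finset.univ (p v) (xab k a b)]
  simp only [Finset.mem_univ, if_true, xab_z, xab_pos a b (p v) (p_val_ne v hv)]
  push_cast
  ring

/-- If the two "row equations" hold, `xab k a b` is an eigenvector. -/
lemma eigen_xab (α a b ρ : ℝ)
    (h0 : α * ((2 * k : ℝ) * a) + (1 - α) * ((2 * k : ℝ) * b) = ρ * a)
    (h1 : α * (2 * b) + (1 - α) * (a + b) = ρ * b) :
    (Aalpha (friendshipGraph k) α).mulVec (xab k a b) = ρ • xab k a b := by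
  funext v
  by_cases hv : v.val = 0
  · have hvz : v = z k := Fin.ext hv
    subst hvz
    rw [row_z, h0]
    simp [xab_z, smul_eq_mul]
  · rw [row_pos α a b v hv, h1]
    simp [xab_pos a b v hv, smul_eq_mul]

end FG

theorem stmt0 (n : ℕ) (hn : 3 ≤ n) (hodd : Odd n) (α : ℝ) (hα : α ∈ Set.Icc (0:ℝ) 1)
    (r : ℝ) (hr : IsLargestEigenvalue (Aalpha (friendshipGraph ((n - 1) / 2)) α) r) :
    r = (α * n + 1 + Real.sqrt (α ^ 2 * n ^ 2 - 10 * α * n + 12 * α + 4 * n - 3)) / 2 := by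
  obtain ⟨hα0, hα1⟩ := hα
  obtain ⟨k, hm⟩ := hodd
  have hn2 : n = 2 * k + 1 := by omega
  have hkdef : (n - 1) / 2 = k := by omega
  rw [hkdef] at hr
  have hk1 : 1 ≤ k := by omega
  have hnr : (n : ℝ) = 2 * k + 1 := by rw [hn2]; push_cast; ring
  have hn3 : (3 : ℝ) ≤ (n : ℝ) := by exact_mod_cast hn
  set Δ : ℝ := α ^ 2 * n ^ 2 - 10 * α * n + 12 * α + 4 * n - 3 with hΔdef
  have hΔ0 : 0 ≤ Δ := by
    have h1 : (0:ℝ) ≤ 4 * ((n:ℝ) - 1) * (1 - α) ^ 2 :=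
      mul_nonneg (by nlinarith) (sq_nonneg _)
    nlinarith [sq_nonneg (α * (n:ℝ) - 2 * α - 1)]
  set s : ℝ := Real.sqrt Δ with hsdef
  have hs2 : s ^ 2 = Δ := Real.sq_sqrt hΔ0
  have hs0 : 0 ≤ s := Real.sqrt_nonneg _
  set ρ : ℝ := (α * n + 1 + s) / 2 with hρdef
  have hMnn := Aalpha_nonneg (friendshipGraph k) α hα0 hα1
  by_cases hα' : α = 1
  · -- α = 1 : the matrix is the degree diagonal matrix, largest eigenvalue 2k
    subst hα'
    have hseq : s = (n : ℝ) - 3 := by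
      rw [hsdef, hΔdef, show (1:ℝ) ^ 2 * n ^ 2 - 10 * 1 * n + 12 * 1 + 4 * n - 3
        = ((n:ℝ) - 3) ^ 2 by ring]
      exact Real.sqrt_sq (by linarith)
    have hρeq : ρ = 2 * (k : ℝ) := by rw [hρdef, hseq, hnr]; ring
    have hlow : ρ ≤ r := by
      refine hr.2 ρ ⟨FG.xab k 1 0, ?_, ?_⟩
      · intro h
        have := congrFun h (FG.z k)
        rw [FG.xab_z] at this
        simpa using this
      · refine FG.eigen_xab 1 1 0 ρ ?_ ?_ <;> rw [hρeq] <;> ring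
    have hup : r ≤ ρ := by
      obtain ⟨y, hy0, hy⟩ := hr.1
      refine perron_bound _ hMnn (FG.xab k 1 1) ?_ ρ ?_ y hy0 r hy
      · intro i; by_cases hi : i.val = 0
        · rw [show i = FG.z k from Fin.ext hi, FG.xab_z]; norm_num
        · rw [FG.xab_pos 1 1 i hi]; norm_num
      · intro i; by_cases hi : i.val = 0
        · rw [show i = FG.z k from Fin.ext hi, FG.row_z, FG.xab_z, hρeq]; ring_nf; rfl
        · rw [FG.row_pos 1 1 1 i hi, FG.xab_pos 1 1 i hi, hρeq]
          have : (1:ℝ) ≤ (k:ℝ) := by exact_mod_cast hk1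
          nlinarith
    linarith
  · -- α < 1
    have hα1' : α < 1 := lt_of_le_of_ne hα1 hα'
    set a : ℝ := ρ - 1 - α with hadef
    set b : ℝ := 1 - α with hbdef
    have hb : 0 < b := by rw [hbdef]; linarith
    have ha : 0 < a := by
      rw [hadef, hρdef]
      have h4 : 0 < 4 * ((n:ℝ) - 1) * (1 - α) ^ 2 := by
        have : (0:ℝ) < (1 - α) ^ 2 := by positivity
        nlinarith
      nlinarith [hs2, hs0, sq_nonneg (s + (1 + 2 * α - α * n)), sq_nonneg (s - (1 + 2 * α - α * n))]
    have h2k : (2 * (k:ℝ)) = (n:ℝ) - 1 := by rw [hnr]; ring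
    have E0 : α * ((2 * (k:ℕ) : ℝ) * a) + (1 - α) * ((2 * (k:ℕ) : ℝ) * b) = ρ * a := by
      push_cast
      rw [h2k, hadef, hbdef, hρdef]
      linear_combination -hs2 / 4
    have E1 : α * (2 * b) + (1 - α) * (a + b) = ρ * b := by
      rw [hadef, hbdef]; ring
    have heig := FG.eigen_xab α a b ρ E0 E1
    have hxne : FG.xab k a b ≠ 0 := by
      intro h
      have := congrFun h (FG.z k)
      rw [FG.xab_z] at this
      exact ha.ne' (by simpa using this)
    have hlow : ρ ≤ r := hr.2 ρ ⟨FG.xab k a b, hxne, heig⟩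
    have hup : r ≤ ρ := by
      obtain ⟨y, hy0, hy⟩ := hr.1
      refine perron_bound _ hMnn (FG.xab k a b) ?_ ρ ?_ y hy0 r hy
      · intro i; by_cases hi : i.val = 0
        · rw [show i = FG.z k from Fin.ext hi, FG.xab_z]; exact ha
        · rw [FG.xab_pos a b i hi]; exact hb
      · intro i
        rw [heig]
        simp [smul_eq_mul]
    linarith
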